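/- Let k ≥ 4 be an integer not divisible by 3. Then the maximum over all pairs of functions v, w : ℤ_k → ℤ₃ of the quantity |{x ∈ ℤ_k : w(x+1) = v(x) + 1}| + |{x ∈ ℤ_k : v(x+1) = w(x) + 1}| equals 2k − 2 if k is even and 2k − 1 if k is odd. Equivalently, the (non-synchronous) deterministic value of the directed k-cycle game is 1 − 1/k when k is even and 1 − 1/(2k) when k is odd. -/

import Mathlib

/-!
Read the `2k` constraints as steps `g (j + 1) = g j + 1` along cycles. Interleaving `v` and `w`
by parity turns the game into functions `g : ℤ_n → ℤ₃` that step at every won input, and a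
function that steps everywhere forces `3 ∣ n`. One cycle `ℤ_{2k}` covers all `2k` inputs, so at
least one is lost; for even `k` they split into two `k`-cycles (`v` on even and `w` on odd points,
and vice versa), each of which loses an input. Conversely `x ↦ x.val` steps everywhere except at
`-1`: played by both players it loses two inputs, and for odd `k` it can be run along the single
cycle `ℤ_k × ℤ₂ ≃ ℤ_{2k}`, losing only one.
-/

open Set

theorem Set.ncard_add_ncard_eq_ncard_ite_add_ncard_ite {α : Type*} [Finite α]
    (c p q : α → Prop) [DecidablePred c] :
    {x | p x}.ncard + {x | q x}.ncard =
      {x | if c x then p x else q x}.ncard + {x | if c x then q x else p x}.ncard := by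
  have hin (r s : α → Prop) :
      {x | if c x then r x else s x} ∩ {x | c x} = {x | r x} ∩ {x | c x} := by
    ext x; by_cases hx : c x <;> simp [hx]
  have hdiff (r s : α → Prop) :
      {x | if c x then r x else s x} \ {x | c x} = {x | s x} \ {x | c x} := by
    ext x; by_cases hx : c x <;> simp [hx]
  rw [← ncard_inter_add_ncard_sdiff_eq_ncard {x | p x} {x | c x},
    ← ncard_inter_add_ncard_sdiff_eq_ncard {x | q x} {x | c x},
    ← ncard_inter_add_ncard_sdiff_eq_ncard {x | if c x then p x else q x} {x | c x},
    ← ncard_inter_add_ncard_sdiff_eq_ncard {x | if c x then q x else p x} {x | c x},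
    hin, hin, hdiff, hdiff]
  omega

namespace ZMod

variable {n : ℕ}

theorem val_add_one_of_ne_neg_one [NeZero n] {x : ZMod n} (hx : x ≠ -1) :
    (x + 1).val = x.val + 1 := by
  have hlt : x.val + 1 < n := by
    refine lt_of_le_of_ne (val_lt x) fun h => hx (eq_neg_of_add_eq_zero_left ?_)
    rw [← natCast_zmod_val x, ← Nat.cast_add_one, h, natCast_self]
  rw [← val_cast_of_lt hlt, Nat.cast_succ, natCast_zmod_val]

variable {R : Type*} [AddMonoidWithOne R]

theorem map_add_natCast_of_forall_map_add_one {g : ZMod n → R}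
    (hg : ∀ x, g (x + 1) = g x + 1) (x : ZMod n) (j : ℕ) : g (x + j) = g x + j := by
  induction j with
  | zero => simp
  | succ j ih => rw [Nat.cast_succ, ← add_assoc, hg, ih, Nat.cast_succ, add_assoc]

theorem natCast_eq_zero_of_forall_map_add_one [IsLeftCancelAdd R] {g : ZMod n → R}
    (hg : ∀ x, g (x + 1) = g x + 1) : (n : R) = 0 := by
  have h := map_add_natCast_of_forall_map_add_one hg 0 n
  rwa [natCast_self, add_zero, left_eq_add] at h

theorem ncard_setOf_map_add_one_le [NeZero n] [IsLeftCancelAdd R] (g : ZMod n → R)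
    (hn : (n : R) ≠ 0) : {x | g (x + 1) = g x + 1}.ncard ≤ n - 1 := by
  have hne : {x | g (x + 1) = g x + 1} ≠ univ := fun h =>
    hn (natCast_eq_zero_of_forall_map_add_one fun x => (h ▸ mem_univ x :))
  have := ncard_lt_card hne
  rw [Nat.card_zmod] at this
  omega

theorem sub_one_le_ncard_setOf_val_add_one [NeZero n] :
    n - 1 ≤ {x : ZMod n | (((x + 1).val : ℕ) : R) = x.val + 1}.ncard := by
  calc n - 1 = ({-1}ᶜ : Set (ZMod n)).ncard := by
        rw [ncard_compl, ncard_singleton, Nat.card_zmod]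
    _ ≤ _ := ncard_le_ncard fun x hx => by
        simp [val_add_one_of_ne_neg_one (mem_compl_singleton_iff.mp hx)]

end ZMod

section CycleGame

variable {R : Type*} [AddMonoidWithOne R]

def interleaveByParity {n m : ℕ} (par : ZMod n →+* ZMod 2) (π : ZMod n →+* ZMod m)
    (v w : ZMod m → R) (j : ZMod n) : R :=
  if par j = 0 then v (π j) else w (π j)

theorem interleaveByParity_add_one_eq_iff {n m : ℕ} (par : ZMod n →+* ZMod 2)
    (π : ZMod n →+* ZMod m) (v w : ZMod m → R) (j : ZMod n) :
    interleaveByParity par π v w (j + 1) = interleaveByParity par π v w j + 1 ↔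
      if par j = 0 then w (π j + 1) = v (π j) + 1 else v (π j + 1) = w (π j) + 1 := by
  have hpar : ∀ p : ZMod 2, p + 1 = 0 ↔ p ≠ 0 := by decide
  by_cases hj : par j = 0 <;> simp [interleaveByParity, hj, hpar]

variable {k : ℕ}

noncomputable def cycleGameWins (v w : ZMod k → R) : ℕ :=
  {x | w (x + 1) = v x + 1}.ncard + {x | v (x + 1) = w x + 1}.ncard

theorem cycleGameWins_le [NeZero k] [IsLeftCancelAdd R] (hk : ((2 * k : ℕ) : R) ≠ 0)
    (v w : ZMod k → R) : cycleGameWins v w ≤ 2 * k - 1 := by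
  unfold cycleGameWins
  set S₁ := {x | w (x + 1) = v x + 1}
  set S₂ := {x | v (x + 1) = w x + 1}
  have hS : ¬(S₁ = univ ∧ S₂ = univ) := by
    rintro ⟨h₁, h₂⟩
    refine hk (ZMod.natCast_eq_zero_of_forall_map_add_one (g := interleaveByParity
      (ZMod.castHom (dvd_mul_right 2 k) (ZMod 2)) (ZMod.castHom (dvd_mul_left k 2) (ZMod k)) v w)
      fun j => (interleaveByParity_add_one_eq_iff _ _ _ _ j).2 ?_)
    split_ifs
    · exact (h₁ ▸ mem_univ _ :)
    · exact (h₂ ▸ mem_univ _ :)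
  have hle (S : Set (ZMod k)) : S.ncard ≤ k := (ncard_le_card S).trans_eq (Nat.card_zmod k)
  have hlt (S : Set (ZMod k)) (hS : S ≠ univ) : S.ncard < k :=
    (ncard_lt_card hS).trans_eq (Nat.card_zmod k)
  by_cases h₁ : S₁ = univ
  · have := hlt S₂ (hS ⟨h₁, ·⟩); have := hle S₁; omega
  · have := hlt S₁ h₁; have := hle S₂; omega

theorem cycleGameWins_le_of_even [IsLeftCancelAdd R] (hk : Even k) (hk₀ : (k : R) ≠ 0)
    (v w : ZMod k → R) : cycleGameWins v w ≤ 2 * k - 2 := by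
  have : NeZero k := ⟨by rintro rfl; exact hk₀ Nat.cast_zero⟩
  let par := ZMod.castHom hk.two_dvd (ZMod 2)
  let g := interleaveByParity par (RingHom.id _) v w
  let h := interleaveByParity par (RingHom.id _) w v
  calc cycleGameWins v w
      = {j | g (j + 1) = g j + 1}.ncard + {j | h (j + 1) = h j + 1}.ncard := by
        simp only [g, h, interleaveByParity_add_one_eq_iff, RingHom.id_apply]
        exact ncard_add_ncard_eq_ncard_ite_add_ncard_ite _ _ _
    _ ≤ (k - 1) + (k - 1) := add_le_add (ZMod.ncard_setOf_map_add_one_le _ hk₀)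
        (ZMod.ncard_setOf_map_add_one_le _ hk₀)
    _ = 2 * k - 2 := by omega

theorem two_mul_sub_two_le_cycleGameWins_val [NeZero k] :
    2 * k - 2 ≤ cycleGameWins (fun x : ZMod k => (x.val : R)) (fun x => x.val) := by
  have := ZMod.sub_one_le_ncard_setOf_val_add_one (n := k) (R := R)
  dsimp only [cycleGameWins]
  omega

theorem exists_two_mul_sub_one_le_cycleGameWins (hk : Odd k) :
    ∃ v w : ZMod k → R, 2 * k - 1 ≤ cycleGameWins v w := by
  have : NeZero k := ⟨hk.pos.ne'⟩
  let ι := (ZMod.chineseRemainder (Nat.coprime_two_right.2 hk)).symm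
  let H : ZMod k × ZMod 2 → R := fun p => ((ι p).val : R)
  have hH (p : ZMod k × ZMod 2) (hp : p ≠ -1) : H (p + 1) = H p + 1 := by
    have : ι p ≠ -1 := by rwa [← map_one ι, ← map_neg, ι.injective.ne_iff]
    simp [H, ZMod.val_add_one_of_ne_neg_one this]
  have hne (x : ZMod k) : ((x, 0) : ZMod k × ZMod 2) ≠ -1 := by
    simp [Prod.ext_iff]
  refine ⟨fun x => H (x, 0), fun x => H (x, 1), ?_⟩
  have h₁ : {x | H (x + 1, 1) = H (x, 0) + 1} = univ :=
    eq_univ_of_forall fun x => hH (x, 0) (hne x)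
  have h₂ : ({-1}ᶜ : Set (ZMod k)) ⊆ {x | H (x + 1, 0) = H (x, 1) + 1} := fun x hx =>
    hH (x, 1) (by simpa [Prod.ext_iff] using hx)
  have := ncard_le_ncard h₂
  rw [ncard_compl, ncard_singleton, Nat.card_zmod] at this
  dsimp only [cycleGameWins]
  rw [h₁, ncard_univ, Nat.card_zmod]
  omega

end CycleGame

/-- For `k ≥ 4` not divisible by 3, the deterministic value of the directed `k`-cycle game
is `1 - 1/k` for even `k` and `1 - 1/(2k)` for odd `k`: the maximum over pairs
`v, w : ℤ_k → ℤ₃` of `|{x : w(x+1) = v(x)+1}| + |{x : v(x+1) = w(x)+1}|` equals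
`2k - 2` if `k` is even and `2k - 1` if `k` is odd. -/
theorem stmt_11 (k : ℕ) (hk : 4 ≤ k) (h3 : ¬ (3 ∣ k)) :
    IsGreatest {n : ℕ | ∃ v w : ZMod k → ZMod 3,
        n = Set.ncard {x : ZMod k | w (x + 1) = v x + 1} +
          Set.ncard {x : ZMod k | v (x + 1) = w x + 1}}
      (if Even k then 2 * k - 2 else 2 * k - 1) := by
  have : NeZero k := ⟨by omega⟩
  have hle (v w : ZMod k → ZMod 3) :
      cycleGameWins v w ≤ if Even k then 2 * k - 2 else 2 * k - 1 := by
    split_ifs with hev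
    · exact cycleGameWins_le_of_even hev (by rwa [Ne, ZMod.natCast_eq_zero_iff]) v w
    · exact cycleGameWins_le (by rw [Ne, ZMod.natCast_eq_zero_iff]; omega) v w
  have hex : ∃ v w : ZMod k → ZMod 3,
      (if Even k then 2 * k - 2 else 2 * k - 1) ≤ cycleGameWins v w := by
    split_ifs with hev
    · exact ⟨_, _, two_mul_sub_two_le_cycleGameWins_val⟩
    · exact exists_two_mul_sub_one_le_cycleGameWins (Nat.not_even_iff_odd.mp hev)
  obtain ⟨v, w, hvw⟩ := hex
  exact ⟨⟨v, w, le_antisymm hvw (hle v w)⟩, fun n ⟨v, w, hn⟩ => hn ▸ hle v w⟩
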